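/- Under the CMES sampling setup with two indices k and M satisfying U_M ≥ U_k and Δ := U_M − U_k, the deviation probability satisfies P(Û_k − Û_M ≥ 0) ≤ exp(−2·Δ² / {Σ_{l=1}^{L} p_l²·(A_{kl} + A_{Ml})}). -/

import Mathlib

open MeasureTheory ProbabilityTheory Finset

/-!
Centring every sample at its mean writes `Û_k - Û_M - (U_k - U_M)` as `∑ c_q (Y_q - 𝔼 Y_q)` over the
independent `[0, 1]`-valued samples of the two estimators, a sample of arm `t` in stratum `l` of
estimator `j` carrying the weight `± p_l w / N_{jtl}` (`w = 1 - π_{jl}` or `π_{jl}`, sign `+` for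
`j = k` and `-` for `j = M`); hence `∑ c_q² = ∑_l p_l² (A_{kl} + A_{Ml})`. By Hoeffding's lemma each
summand is sub-Gaussian with variance proxy `c_q² / 4`, so Hoeffding's inequality at level
`Δ = U_M - U_k ≥ 0` gives the bound.
-/

section Hoeffding

variable {Ω ι : Type*} [MeasurableSpace Ω] {P : Measure Ω} [IsProbabilityMeasure P]

theorem measureReal_sum_mul_sub_integral_ge_le_of_iIndepFun {X : ι → Ω → ℝ}
    (hindep : iIndepFun X P) (hmeas : ∀ i, AEMeasurable (X i) P) {a b : ι → ℝ}
    (hX : ∀ i, ∀ᵐ ω ∂P, X i ω ∈ Set.Icc (a i) (b i)) (s : Finset ι) (c : ι → ℝ)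
    {ε : ℝ} (hε : 0 ≤ ε) :
    P.real {ω | ε ≤ ∑ i ∈ s, c i * (X i ω - P[X i])}
      ≤ Real.exp (-2 * ε ^ 2 / ∑ i ∈ s, (c i * (b i - a i)) ^ 2) := by
  have hindep' : iIndepFun (fun i ω => c i * (X i ω - P[X i])) P :=
    hindep.comp (fun i y => c i * (y - ∫ ω, X i ω ∂P)) fun i => by fun_prop
  have hsub i (_ : i ∈ s) : HasSubgaussianMGF (fun ω => c i * (X i ω - P[X i]))
      (‖c i * (b i - a i)‖₊ ^ 2 / 4) P := by
    convert (hasSubgaussianMGF_of_mem_Icc (hmeas i) (hX i)).const_mul (c i) using 2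
    ext
    -- `const_mul` builds its constant with a bare `Subtype.mk`, which `NNReal.coe_mul` misses
    change _ = c i ^ 2 * ((‖b i - a i‖₊ / 2) ^ 2 : NNReal)
    simp only [nnnorm_mul, mul_pow, div_pow, NNReal.coe_div, NNReal.coe_mul, NNReal.coe_pow,
      coe_nnnorm, Real.norm_eq_abs, sq_abs, NNReal.coe_ofNat]
    ring
  refine (HasSubgaussianMGF.measure_sum_ge_le_of_iIndepFun hindep' hsub hε).trans_eq ?_
  simp only [NNReal.coe_sum, NNReal.coe_div, NNReal.coe_pow, coe_nnnorm, Real.norm_eq_abs, sq_abs,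
    NNReal.coe_ofNat, ← Finset.sum_div]
  congr 1
  ring

end Hoeffding

theorem Finset.sum_sigma_pair_product {α β M : Type*} [DecidableEq α] [Fintype β]
    [AddCommMonoid M] {j₁ j₂ : α} (h : j₁ ≠ j₂) (n : α × β → ℕ) (f : (Σ _ : α × β, ℕ) → M) :
    ∑ x ∈ (({j₁, j₂} : Finset α) ×ˢ univ).sigma (fun j => range (n j)), f x
      = ∑ b, ∑ i ∈ range (n (j₁, b)), f ⟨(j₁, b), i⟩
        + ∑ b, ∑ i ∈ range (n (j₂, b)), f ⟨(j₂, b), i⟩ := by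
  rw [sum_sigma, sum_product, sum_pair h]

section StratifiedMean

variable {L : ℕ} (p π : Fin L → ℝ) (N : Fin 2 → Fin L → ℕ)

noncomputable def stratifiedMean (y : Fin 2 → Fin L → ℕ → ℝ) : ℝ :=
  ∑ l, p l * ((1 - π l) * ((N 0 l : ℝ)⁻¹ * ∑ i ∈ range (N 0 l), y 0 l i)
    + π l * ((N 1 l : ℝ)⁻¹ * ∑ i ∈ range (N 1 l), y 1 l i))

noncomputable def sampleWeight (t : Fin 2) (l : Fin L) : ℝ :=
  p l * ![1 - π l, π l] t / N t l

theorem stratifiedMean_eq_sum (y : Fin 2 → Fin L → ℕ → ℝ) :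
    stratifiedMean p π N y = ∑ t, ∑ l, ∑ i ∈ range (N t l), sampleWeight p π N t l * y t l i := by
  simp only [stratifiedMean, sampleWeight, Fin.sum_univ_two, ← sum_add_distrib, ← mul_sum]
  refine sum_congr rfl fun l _ => ?_
  simp only [Matrix.cons_val_zero, Matrix.cons_val_one, Matrix.cons_val_fin_one]
  ring

theorem stratifiedMean_sub_stratifiedMean (y y' : Fin 2 → Fin L → ℕ → ℝ) :
    stratifiedMean p π N y - stratifiedMean p π N y'
      = ∑ t, ∑ l, ∑ i ∈ range (N t l), sampleWeight p π N t l * (y t l i - y' t l i) := by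
  simp only [stratifiedMean_eq_sum, mul_sub, sum_sub_distrib]

theorem stratifiedMean_const (hN : ∀ t l, N t l ≠ 0) (μ : Fin 2 → Fin L → ℝ) :
    stratifiedMean p π N (fun t l _ => μ t l) = ∑ l, p l * ((1 - π l) * μ 0 l + π l * μ 1 l) := by
  simp [stratifiedMean, hN]

theorem sum_sampleWeight_sq :
    ∑ t, ∑ l, ∑ _i ∈ range (N t l), sampleWeight p π N t l ^ 2
      = ∑ l, p l ^ 2 * ((1 - π l) ^ 2 / N 0 l + π l ^ 2 / N 1 l) := by
  have hcard (n : ℕ) (x : ℝ) : n * (x / n) ^ 2 = x ^ 2 / n := by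
    rcases eq_or_ne n 0 with rfl | hn
    · simp
    · field_simp
  simp only [sampleWeight, Fin.sum_univ_two, ← sum_add_distrib, sum_const, card_range,
    nsmul_eq_mul, hcard]
  refine sum_congr rfl fun l _ => ?_
  simp only [Matrix.cons_val_zero, Matrix.cons_val_one, Matrix.cons_val_fin_one]
  ring

end StratifiedMean

theorem cmes_hoeffding_deviation_bound_general
    {Ω : Type*} [MeasurableSpace Ω] (P : Measure Ω) [IsProbabilityMeasure P]
    (L : ℕ)
    (p : Fin L → ℝ)
    (m : ℕ)
    (π : Fin m → Fin L → ℝ)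
    (N : Fin m → Fin 2 → Fin L → ℕ) (hN : ∀ k t l, 1 ≤ N k t l)
    (Y : Fin m → Fin 2 → Fin L → ℕ → Ω → ℝ)
    (hmeas : ∀ k t l i, Measurable (Y k t l i))
    (hrange : ∀ k t l i ω, Y k t l i ω ∈ Set.Icc (0 : ℝ) 1)
    (μ : Fin m → Fin 2 → Fin L → ℝ)
    (hmean : ∀ k t l i, ∫ ω, Y k t l i ω ∂P = μ k t l)
    (hindep : iIndepFun
      (fun q : Fin m × Fin 2 × Fin L × ℕ => Y q.1 q.2.1 q.2.2.1 q.2.2.2) P)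
    (Uhat : Fin m → Ω → ℝ)
    (hUhat : ∀ k ω, Uhat k ω
      = ∑ l, p l *
          ((1 - π k l) * ((N k 0 l : ℝ)⁻¹ * ∑ i ∈ Finset.range (N k 0 l), Y k 0 l i ω)
            + π k l * ((N k 1 l : ℝ)⁻¹ * ∑ i ∈ Finset.range (N k 1 l), Y k 1 l i ω)))
    (U : Fin m → ℝ)
    (hU : ∀ k, U k = ∑ l, p l * ((1 - π k l) * μ k 0 l + π k l * μ k 1 l))
    (A : Fin m → Fin L → ℝ)
    (hA : ∀ k l, A k l = (1 - π k l) ^ 2 / (N k 0 l : ℝ) + (π k l) ^ 2 / (N k 1 l : ℝ))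
    (k M : Fin m) (hkM : k ≠ M) (hUM : U k ≤ U M) :
    (P {ω | 0 ≤ Uhat k ω - Uhat M ω}).toReal
      ≤ Real.exp (-2 * (U M - U k) ^ 2 / ∑ l, (p l) ^ 2 * (A k l + A M l)) := by
  let S := (({k, M} : Finset (Fin m)) ×ˢ (univ : Finset (Fin 2 × Fin L))).sigma
    fun j => range (N j.1 j.2.1 j.2.2)
  let Z : (Σ _ : Fin m × Fin 2 × Fin L, ℕ) → Ω → ℝ := fun x => Y x.1.1 x.1.2.1 x.1.2.2 x.2
  let c : (Σ _ : Fin m × Fin 2 × Fin L, ℕ) → ℝ := fun x =>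
    (if x.1.1 = k then 1 else -1) * sampleWeight p (π x.1.1) (N x.1.1) x.1.2.1 x.1.2.2
  have hZ : iIndepFun Z P :=
    hindep.precomp (g := fun x : Σ _ : Fin m × Fin 2 × Fin L, ℕ => (x.1.1, x.1.2.1, x.1.2.2, x.2))
      (by rintro ⟨⟨j, t, l⟩, i⟩ ⟨⟨j', t', l'⟩, i'⟩ h; cases h; rfl)
  have hcentred j ω : Uhat j ω - U j = ∑ t, ∑ l, ∑ i ∈ range (N j t l),
      sampleWeight p (π j) (N j) t l * (Y j t l i ω - μ j t l) := by
    have hUhat' : Uhat j ω = stratifiedMean p (π j) (N j) (fun t l i => Y j t l i ω) := hUhat j ω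
    rw [hUhat', hU, ← stratifiedMean_const p (π j) (N j)
      (fun t l => Nat.one_le_iff_ne_zero.mp (hN j t l)) (μ j), stratifiedMean_sub_stratifiedMean]
  have hdiff ω : Uhat k ω - Uhat M ω - (U k - U M) = ∑ x ∈ S, c x * (Z x ω - P[Z x]) := by
    simp only [S, Z, c, hmean, sum_sigma_pair_product hkM, if_pos, if_neg hkM.symm,
      Fintype.sum_prod_type, one_mul, neg_mul, sum_neg_distrib, ← hcentred]
    ring
  have hvar : ∑ x ∈ S, (c x * (1 - 0)) ^ 2 = ∑ l, p l ^ 2 * (A k l + A M l) := by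
    simp only [S, c, sum_sigma_pair_product hkM, if_pos, if_neg hkM.symm, Fintype.sum_prod_type,
      sub_zero, mul_one, mul_pow, neg_one_sq, one_pow, one_mul, sum_sampleWeight_sq,
      ← sum_add_distrib, hA, mul_add]
  calc (P {ω | 0 ≤ Uhat k ω - Uhat M ω}).toReal
      = P.real {ω | U M - U k ≤ ∑ x ∈ S, c x * (Z x ω - P[Z x])} := by
        simp only [← hdiff, measureReal_def]
        congr with ω
        constructor <;> intro h <;> linarith
    _ ≤ _ := measureReal_sum_mul_sub_integral_ge_le_of_iIndepFun hZ
        (fun _ => (hmeas _ _ _ _).aemeasurable) (a := fun _ => 0) (b := fun _ => 1)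
        (fun _ => ae_of_all _ (hrange _ _ _ _)) S c (sub_nonneg.2 hUM)
    _ = _ := by rw [hvar]

/-- Under the CMES sampling setup with two indices `k` and `M` satisfying
`U M ≥ U k` and `Δ := U M − U k`, the deviation probability satisfies
`P(Û_k − Û_M ≥ 0) ≤ exp(−2Δ² / Σ_l p_l²·(A_{kl}+A_{Ml}))`. -/
theorem cmes_hoeffding_deviation_bound
    {Ω : Type*} [MeasurableSpace Ω] (P : Measure Ω) [IsProbabilityMeasure P]
    (L : ℕ) (hL : 1 ≤ L)
    (p : Fin L → ℝ) (hp : ∀ l, 0 ≤ p l) (hpsum : ∑ l, p l = 1)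
    (m : ℕ) (hm : 1 ≤ m)
    (π : Fin m → Fin L → ℝ) (hπ : ∀ k l, π k l ∈ Set.Icc (0 : ℝ) 1)
    (N : Fin m → Fin 2 → Fin L → ℕ) (hN : ∀ k t l, 1 ≤ N k t l)
    (Y : Fin m → Fin 2 → Fin L → ℕ → Ω → ℝ)
    (hmeas : ∀ k t l i, Measurable (Y k t l i))
    (hrange : ∀ k t l i ω, Y k t l i ω ∈ Set.Icc (0 : ℝ) 1)
    (μ : Fin m → Fin 2 → Fin L → ℝ)
    (hmean : ∀ k t l i, ∫ ω, Y k t l i ω ∂P = μ k t l)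
    (hident : ∀ k t l i j, P.map (Y k t l i) = P.map (Y k t l j))
    (hindep : iIndepFun
      (fun q : Fin m × Fin 2 × Fin L × ℕ => Y q.1 q.2.1 q.2.2.1 q.2.2.2) P)
    (Uhat : Fin m → Ω → ℝ)
    (hUhat : ∀ k ω, Uhat k ω
      = ∑ l, p l *
          ((1 - π k l) * ((N k 0 l : ℝ)⁻¹ * ∑ i ∈ Finset.range (N k 0 l), Y k 0 l i ω)
            + π k l * ((N k 1 l : ℝ)⁻¹ * ∑ i ∈ Finset.range (N k 1 l), Y k 1 l i ω)))
    (U : Fin m → ℝ)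
    (hU : ∀ k, U k = ∑ l, p l * ((1 - π k l) * μ k 0 l + π k l * μ k 1 l))
    (A : Fin m → Fin L → ℝ)
    (hA : ∀ k l, A k l = (1 - π k l) ^ 2 / (N k 0 l : ℝ) + (π k l) ^ 2 / (N k 1 l : ℝ))
    (k M : Fin m) (hkM : k ≠ M) (hUM : U k ≤ U M) :
    (P {ω | 0 ≤ Uhat k ω - Uhat M ω}).toReal
      ≤ Real.exp (-2 * (U M - U k) ^ 2 / ∑ l, (p l) ^ 2 * (A k l + A M l)) :=
  cmes_hoeffding_deviation_bound_general P L p m π N hN Y hmeas hrange μ hmean hindep Uhat hUhat U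
    hU A hA k M hkM hUM
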